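/- If a strictly increasing sequence (a_n)_{n∈ℕ} of positive integers is quasi-arithmetic of degree d for some positive integer d, then there is no real number α such that the sequence ({a_n α})_{n∈ℕ} of fractional parts has Poissonian pair correlations. -/

import Mathlib

open Finset Filter
open scoped Classical

/-- Distance to the nearest integer. -/
noncomputable def nint (x : ℝ) : ℝ := |x - round x|

/-- Number of pairs `1 ≤ i ≠ j ≤ N` with `‖x i - x j‖ ≤ s / N`. -/
noncomputable def pairCount (x : ℕ → ℝ) (N : ℕ) (s : ℝ) : ℕ :=
  (((Finset.Icc 1 N) ×ˢ (Finset.Icc 1 N)).filter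
    fun p => p.1 ≠ p.2 ∧ nint (x p.1 - x p.2) ≤ s / N).card

/-- A sequence in `[0,1)` has Poissonian pair correlations. -/
noncomputable def PoissonianPairCorrelations (x : ℕ → ℝ) : Prop :=
  ∀ s : ℝ, 0 < s →
    Tendsto (fun N : ℕ => (pairCount x N s : ℝ) / N) atTop (nhds (2 * s))

/-- The set of the first `N` elements of the sequence `a` (indexed from 1). -/
def firstN (a : ℕ → ℕ) (N : ℕ) : Finset ℤ :=
  (Finset.Icc 1 N).image fun n => (a n : ℤ)

/-- The `d`-dimensional arithmetic progression
`{h + ∑ j r j * k j | 0 ≤ r j < s j}`. -/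
def dimAP (d : ℕ) (h : ℤ) (k : Fin d → ℤ) (s : Fin d → ℕ) : Finset ℤ :=
  (Fintype.piFinset fun j => Finset.range (s j)).image
    fun r => h + ∑ j, (r j : ℤ) * k j

/-- A strictly increasing sequence of positive integers is quasi-arithmetic of
degree `d`. -/
def QuasiArithmetic (a : ℕ → ℕ) (d : ℕ) : Prop :=
  ∃ C K : ℝ, 0 < C ∧ 0 < K ∧
    ∃ N : ℕ → ℕ, StrictMono N ∧ (∀ i, 0 < N i) ∧
      ∀ i, ∃ A : Finset ℤ, A ⊆ firstN a (N i) ∧ (C * N i : ℝ) ≤ A.card ∧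
        ∃ (h : ℤ) (k : Fin d → ℤ) (s : Fin d → ℕ),
          (∀ j, 0 < s j) ∧ A ⊆ dimAP d h k s ∧ ((∏ j, s j : ℕ) : ℝ) ≤ K * N i

open scoped Pointwise Combinatorics.Additive

/-!
Let `A ⊆ {a_1, …, a_N}` have `#A ≥ C N` and lie in a `d`-dimensional progression
`{h + ∑ r_j k_j : r_j < s_j}` with `∏ s_j ≤ K N`. Pigeonholing `x ∈ A` by `{x α}` and by its
coordinates `r(x)` into `O(N)` cells gives `m = ∑ η_j k_j ≠ 0` with `‖m α‖ = O(1 / N)` and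
`2 L |η_j| < s_j`, so the translates `A + t m`, `t < L`, all lie in a progression of size
`≤ 2^d K N`. By Cauchy–Schwarz (the additive energy of `A` and `{t m : t < L}`) some multiple `j m`,
`0 < |j| < L`, is a difference of two elements of `A` at least `c N` times.

So for infinitely many `N`, at least `c N` pairs `i ≠ j ≤ N` share one value `r` of
`‖x_i - x_j‖`, with `N r` bounded. Along a subsequence on which `N r → v`, the number of pairs with
`‖x_i - x_j‖ ∈ ((v - c/8)/N, (v + c/8)/N]` is then at least `c N`, whereas Poissonian pair
correlations make it `(c/2 + o(1)) N`.
-/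

lemma nint_nonneg (x : ℝ) : 0 ≤ nint x := abs_nonneg _

lemma nint_le_abs (x : ℝ) : nint x ≤ |x| := by
  simpa [nint] using round_le x 0

lemma nint_add_intCast (x : ℝ) (z : ℤ) : nint (x + z) = nint x := by
  simp [nint, round_add_intCast]

lemma nint_fract_sub_fract (u v : ℝ) : nint (Int.fract u - Int.fract v) = nint (u - v) := by
  rw [Int.fract, Int.fract, show u - ⌊u⌋ - (v - ⌊v⌋) = u - v + ((⌊v⌋ - ⌊u⌋ : ℤ) : ℝ) by
    push_cast; ring, nint_add_intCast]

lemma nint_intCast_mul_le (j : ℤ) (x : ℝ) : nint (j * x) ≤ |(j : ℝ)| * nint x := by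
  simp only [nint, ← UnitAddCircle.norm_eq]
  simpa [AddCircle.coe_zsmul, Int.norm_eq_abs] using norm_zsmul_le j (x : UnitAddCircle)

noncomputable def pairsAtDist (x : ℕ → ℝ) (N : ℕ) (r : ℝ) : Finset (ℕ × ℕ) :=
  (Icc 1 N ×ˢ Icc 1 N).filter fun p => p.1 ≠ p.2 ∧ nint (x p.1 - x p.2) = r

lemma pairCount_add_card_pairsAtDist_le (x : ℕ → ℝ) (N : ℕ) {r s₁ s₂ : ℝ}
    (h₁ : s₁ / N < r) (h₂ : r ≤ s₂ / N) :
    pairCount x N s₁ + #(pairsAtDist x N r) ≤ pairCount x N s₂ := by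
  rw [pairCount, pairsAtDist, ← card_union_of_disjoint]
  · refine card_le_card fun p hp => ?_
    simp only [mem_union, mem_filter] at hp ⊢
    rcases hp with ⟨hp, hne, hle⟩ | ⟨hp, hne, rfl⟩
    · exact ⟨hp, hne, hle.trans (h₁.trans_le h₂).le⟩
    · exact ⟨hp, hne, h₂⟩
  · exact disjoint_filter.2 fun p _ h h' => by linarith [h.2, h'.2]

lemma PoissonianPairCorrelations.eventually_pairCount_lt {x : ℕ → ℝ}
    (hx : PoissonianPairCorrelations x) {s₁ s₂ c : ℝ} (hs₂ : 0 < s₂) (hc : 2 * (s₂ - s₁) < c) :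
    ∀ᶠ N : ℕ in atTop, (pairCount x N s₂ : ℝ) < pairCount x N s₁ + c * N := by
  have hlt : ∀ᶠ N : ℕ in atTop, (pairCount x N s₂ : ℝ) / N < pairCount x N s₁ / N + c := by
    by_cases hs₁ : 0 < s₁
    · have := ((hx s₂ hs₂).sub (hx s₁ hs₁)).eventually_lt_const (by linarith)
      exact this.mono fun N hN => by linarith
    · filter_upwards [(hx s₂ hs₂).eventually_lt_const (by linarith [not_lt.1 hs₁])] with N hN
      linarith [(by positivity : (0 : ℝ) ≤ pairCount x N s₁ / N)]
  filter_upwards [hlt, eventually_gt_atTop 0] with N hN hN0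
  have hN0' : (0 : ℝ) < N := Nat.cast_pos.2 hN0
  rwa [div_lt_iff₀ hN0', add_mul, div_mul_cancel₀ _ hN0'.ne'] at hN

theorem PoissonianPairCorrelations.not_frequently_pairsAtDist {x : ℕ → ℝ}
    (hx : PoissonianPairCorrelations x) {c S : ℝ} (hc : 0 < c) :
    ¬ ∃ᶠ N : ℕ in atTop, ∃ r : ℝ,
      0 ≤ (N : ℝ) * r ∧ (N : ℝ) * r ≤ S ∧ c * N ≤ #(pairsAtDist x N r) := by
  intro hfreq
  obtain ⟨φ, hφ, hP⟩ := extraction_of_frequently_atTop hfreq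
  choose r hr₀ hrS hcard using hP
  obtain ⟨v, hv, ψ, hψ, hlim⟩ :=
    isCompact_Icc.tendsto_subseq fun n => (⟨hr₀ n, hrS n⟩ : (φ n : ℝ) * r n ∈ Set.Icc 0 S)
  have hN := (hφ.comp hψ).tendsto_atTop
  have hnear : ∀ᶠ n in atTop, (φ (ψ n) : ℝ) * r (ψ n) ∈ Set.Ioo (v - c / 8) (v + c / 8) :=
    hlim (Ioo_mem_nhds (by linarith) (by linarith))
  have hpc := hN.eventually
    (hx.eventually_pairCount_lt (s₁ := v - c / 8) (s₂ := v + c / 8) (c := c) (by linarith [hv.1])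
      (by linarith))
  obtain ⟨n, ⟨hlo, hhi⟩, hlt, hpos⟩ := (hnear.and (hpc.and (hN.eventually
    (eventually_gt_atTop 0)))).exists
  have hpos' : (0 : ℝ) < φ (ψ n) := Nat.cast_pos.2 hpos
  have hle := pairCount_add_card_pairsAtDist_le x (φ (ψ n)) (r := r (ψ n))
    ((div_lt_iff₀' hpos').2 hlo) ((le_div_iff₀' hpos').2 hhi.le)
  have hle' : (pairCount x (φ (ψ n)) (v - c / 8) : ℝ) + #(pairsAtDist x (φ (ψ n)) (r (ψ n)))
      ≤ pairCount x (φ (ψ n)) (v + c / 8) := by exact_mod_cast hle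
  simp only [Function.comp] at hlt
  linarith [hcard (ψ n)]

def diffCount {G : Type*} [AddGroup G] [DecidableEq G] (A : Finset G) (m : G) : ℕ :=
  #{q ∈ A ×ˢ A | q.1 - q.2 = m}

lemma diffCount_zero {G : Type*} [AddGroup G] [DecidableEq G] (A : Finset G) :
    diffCount A 0 = #A := by
  rw [diffCount, ← A.diag_card]
  congr 1
  ext ⟨x, y⟩
  simp +contextual [sub_eq_zero]

lemma diffCount_le_card_pairsAtDist (a : ℕ → ℕ) (α : ℝ) {N : ℕ} {A : Finset ℤ}
    (hA : A ⊆ firstN a N) {m : ℤ} (hm : m ≠ 0) :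
    diffCount A m ≤ #(pairsAtDist (fun n => Int.fract (a n * α)) N (nint (m * α))) := by
  refine card_le_card_of_surjOn (fun p => ((a p.1 : ℤ), (a p.2 : ℤ))) ?_
  rintro ⟨x, y⟩ hxy
  simp only [mem_coe, mem_filter, mem_product] at hxy
  obtain ⟨⟨hx, hy⟩, rfl⟩ := hxy
  obtain ⟨i, hi, rfl⟩ := mem_image.1 (hA hx)
  obtain ⟨j, hj, rfl⟩ := mem_image.1 (hA hy)
  refine ⟨(i, j), ?_, rfl⟩
  simp only [pairsAtDist, mem_coe, mem_filter, mem_product, nint_fract_sub_fract]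
  refine ⟨⟨hi, hj⟩, fun hij => hm (by simp [hij]), by push_cast; ring_nf⟩

lemma addEnergy_eq_sum_diffCount {G : Type*} [AddCommGroup G] [DecidableEq G]
    (A P : Finset G) : E[A, P] = ∑ p ∈ P ×ˢ P, diffCount A (p.2 - p.1) := by
  rw [addEnergy, card_eq_sum_card_fiberwise (f := fun x => x.2) (t := P ×ˢ P)
    (fun x hx => (mem_product.1 (mem_filter.1 hx).1).2)]
  refine sum_congr rfl fun ⟨p₁, p₂⟩ hp => card_nbij' (fun x => x.1) (fun q => (q, (p₁, p₂)))
    ?_ ?_ ?_ ?_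
  · rintro ⟨⟨a₁, a₂⟩, q₁, q₂⟩ hx
    simp only [mem_coe, mem_filter, mem_product, Prod.mk.injEq] at hx ⊢
    obtain ⟨⟨⟨hA, -⟩, hsum⟩, rfl, rfl⟩ := hx
    exact ⟨hA, sub_eq_sub_iff_add_eq_add.2 (hsum.trans (add_comm _ _))⟩
  · rintro ⟨a₁, a₂⟩ hq
    simp only [mem_coe, mem_filter, mem_product] at hq hp ⊢
    exact ⟨⟨⟨hq.1, hp⟩, (sub_eq_sub_iff_add_eq_add.1 hq.2).trans (add_comm _ _)⟩, trivial⟩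
  · rintro ⟨⟨a₁, a₂⟩, q₁, q₂⟩ hx
    simp only [mem_coe, mem_filter, Prod.mk.injEq] at hx
    obtain ⟨-, rfl, rfl⟩ := hx
    rfl
  · intro q _; rfl

lemma addEnergy_image_mul_eq_sum (A : Finset ℤ) {m : ℤ} (hm : m ≠ 0) (L : ℕ) :
    E[A, (range L).image fun t : ℕ => (t : ℤ) * m] =
      ∑ t ∈ range L ×ˢ range L, diffCount A (((t.2 : ℤ) - t.1) * m) := by
  have hinj : Set.InjOn (fun t : ℕ => (t : ℤ) * m) (range L) := fun t _ t' _ h => by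
    exact_mod_cast mul_right_cancel₀ hm h
  rw [addEnergy_eq_sum_diffCount, sum_product, sum_image hinj, sum_product]
  exact sum_congr rfl fun t₁ _ => by rw [sum_image hinj]; simp [sub_mul]

lemma exists_le_diffCount_mul {A B : Finset ℤ} {m : ℤ} {L : ℕ} (hm : m ≠ 0) (hL : 2 ≤ L)
    (hAB : ∀ x ∈ A, ∀ t < L, x + t * m ∈ B) :
    ∃ j : ℤ, j ≠ 0 ∧ |j| < L ∧ (#A : ℝ) ^ 2 / #B - #A / L ≤ diffCount A (j * m) := by
  set D : ℝ := (#A : ℝ) ^ 2 / #B - #A / L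
  by_contra! hsmall
  have hD : 0 < D := (Nat.cast_nonneg _).trans_lt (hsmall 1 one_ne_zero (by simp; omega))
  have hB : (0 : ℝ) < #B := by
    rcases (Nat.cast_nonneg (α := ℝ) #B).eq_or_lt with hB | hB
    · have : D ≤ 0 := by simp only [D, ← hB, div_zero, zero_sub, neg_nonpos]; positivity
      linarith
    · exact hB
  set P := (range L).image fun t : ℕ => (t : ℤ) * m
  have hP : #P = L := by
    rw [card_image_of_injective _ fun t t' h => by exact_mod_cast mul_right_cancel₀ hm h,
      card_range]
  have hAPB : #(A + P) ≤ #B := card_le_card fun z hz => by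
    obtain ⟨x, hx, _, hp, rfl⟩ := Finset.mem_add.1 hz
    obtain ⟨t, ht, rfl⟩ := mem_image.1 hp
    exact hAB x hx t (mem_range.1 ht)
  have henergy : (#A : ℝ) ^ 2 * L ^ 2 ≤ #B * E[A, P] := by
    have := (le_card_add_mul_addEnergy A P).trans (Nat.mul_le_mul_right _ hAPB)
    rw [hP] at this
    exact_mod_cast this
  have hterm : ∀ t ∈ range L ×ˢ range L,
      (diffCount A (((t.2 : ℤ) - t.1) * m) : ℝ) ≤ (if t.1 = t.2 then (#A : ℝ) else 0) + D := by
    rintro ⟨t₁, t₂⟩ ht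
    simp only [mem_product, mem_range] at ht
    split_ifs with h <;> simp only at h
    · simp [h, diffCount_zero, hD.le]
    · simpa using (hsmall ((t₂ : ℤ) - t₁) (by omega) (by rw [abs_lt]; omega)).le
  have hsum : ∑ t ∈ range L ×ˢ range L, (diffCount A (((t.2 : ℤ) - t.1) * m) : ℝ)
      < L * #A + L ^ 2 * D := by
    calc _ < ∑ t ∈ range L ×ˢ range L, ((if t.1 = t.2 then (#A : ℝ) else 0) + D) := by
          refine sum_lt_sum hterm ⟨(0, 1), by simp; omega, ?_⟩
          simpa using hsmall 1 one_ne_zero (by simp; omega)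
      _ = L * #A + L ^ 2 * D := by
          rw [sum_add_distrib, sum_product,
            sum_congr rfl fun x _ => sum_ite_eq (range L) x fun _ => (#A : ℝ),
            sum_ite_of_true fun x hx => hx]
          simp [sq]
  rw [addEnergy_image_mul_eq_sum A hm, Nat.cast_sum] at henergy
  have : (#B : ℝ) * (L * #A + L ^ 2 * D) = #A ^ 2 * L ^ 2 := by
    simp only [D]
    field_simp
    ring
  nlinarith [mul_lt_mul_of_pos_left hsum hB]

lemma mul_le_sq_div_sub_div_of_dense {C K : ℝ} (hC : 0 < C) (hK : 0 < K) {N n P L d : ℕ}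
    (hN : 0 < N) (hAN : n ≤ N) (hCA : C * N ≤ n) (hnP : n ≤ P) (hP : (P : ℝ) ≤ K * N)
    (hL : 0 < L) (hLK : 2 ^ (d + 1) * K ≤ C ^ 2 * L) :
    C ^ 2 / (2 ^ (d + 1) * K) * N ≤ (n : ℝ) ^ 2 / (2 ^ d * P) - n / L := by
  have hnpos : (0 : ℝ) < n := hCA.trans_lt' (by positivity)
  have hPpos : (0 : ℝ) < P := hnpos.trans_le (by exact_mod_cast hnP)
  have h₁ : C ^ 2 / (2 ^ d * K) * N ≤ (n : ℝ) ^ 2 / (2 ^ d * P) :=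
    calc C ^ 2 / (2 ^ d * K) * N = (C * N) ^ 2 / (2 ^ d * (K * N)) := by field_simp
      _ ≤ _ := by gcongr
  have h₂ : (n : ℝ) / L ≤ C ^ 2 / (2 ^ (d + 1) * K) * N :=
    calc (n : ℝ) / L ≤ N / L := by gcongr
      _ ≤ C ^ 2 / (2 ^ (d + 1) * K) * N := by
        rw [div_mul_eq_mul_div, div_le_div_iff₀ (by positivity) (by positivity)]
        nlinarith
  have h₃ : C ^ 2 / (2 ^ d * K) * N = 2 * (C ^ 2 / (2 ^ (d + 1) * K) * N) := by
    rw [pow_succ]; field_simp; ring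
  linarith

section Progression

variable {d : ℕ} {h : ℤ} {k : Fin d → ℤ} {s : Fin d → ℕ}

lemma mem_dimAP {x : ℤ} :
    x ∈ dimAP d h k s ↔ ∃ r : Fin d → ℕ, (∀ j, r j < s j) ∧ h + ∑ j, (r j : ℤ) * k j = x := by
  simp [dimAP, Fintype.mem_piFinset]

lemma card_dimAP_le : #(dimAP d h k s) ≤ ∏ j, s j :=
  card_image_le.trans (by simp [Fintype.card_piFinset])

lemma add_sum_mem_dimAP {x : ℤ} (hx : x ∈ dimAP d h k s) {η : Fin d → ℤ} {c : Fin d → ℕ}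
    (hη : ∀ j, |η j| ≤ c j) :
    x + ∑ j, η j * k j ∈ dimAP d (h - ∑ j, (c j : ℤ) * k j) k (fun j => s j + 2 * c j) := by
  obtain ⟨r, hr, rfl⟩ := mem_dimAP.1 hx
  have hbounds : ∀ j, 0 ≤ (r j : ℤ) + η j + c j ∧ (r j : ℤ) + η j + c j < s j + 2 * c j :=
    fun j => by have := abs_le.1 (hη j); have := hr j; omega
  refine mem_dimAP.2 ⟨fun j => ((r j : ℤ) + η j + c j).toNat, fun j => by
    have := hbounds j; beta_reduce; omega, ?_⟩
  simp only [fun j => Int.toNat_of_nonneg (hbounds j).1, add_mul, sum_add_distrib]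
  ring

-- `η` is the difference of the coordinates of two elements `x ≠ y` of `A` sharing one of the
-- `J * T ^ d` boxes that partition `[0, 1) × ∏ j, [0, s j)`, the first coordinate being `{x α}`.
lemma exists_short_difference_of_card_lt (α : ℝ) {A : Finset ℤ} (hA : A ⊆ dimAP d h k s)
    {J T : ℕ} (hJ : 0 < J) (hT : 0 < T) (hcard : J * T ^ d < #A) :
    ∃ η : Fin d → ℤ, (∀ j, T * |η j| < s j) ∧ ∑ j, η j * k j ≠ 0 ∧
      nint ((∑ j, η j * k j : ℤ) * α) < 1 / J := by
  have hrep : ∀ x ∈ A, ∃ r : Fin d → ℕ, (∀ j, r j < s j) ∧ h + ∑ j, (r j : ℤ) * k j = x :=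
    fun x hx => mem_dimAP.1 (hA hx)
  choose! r hr hrx using hrep
  have hmaps : ∀ x ∈ A, (⌊Int.fract (x * α) * J⌋, fun j => ⌊(r x j : ℝ) * T / s j⌋) ∈
      Ico 0 (J : ℤ) ×ˢ Fintype.piFinset fun _ : Fin d => Ico 0 (T : ℤ) := by
    intro x hx
    have hJ' : (0 : ℝ) < J := Nat.cast_pos.2 hJ
    simp only [mem_product, Fintype.mem_piFinset, mem_Ico, Int.floor_nonneg, Int.floor_lt]
    refine ⟨⟨by positivity, by push_cast; nlinarith [Int.fract_lt_one (x * α)]⟩, fun j => ?_⟩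
    have hsj : (0 : ℝ) < s j := by exact_mod_cast (Nat.zero_le _).trans_lt (hr x hx j)
    have hrj : (r x j : ℝ) < s j := by exact_mod_cast hr x hx j
    refine ⟨by positivity, ?_⟩
    rw [Int.cast_natCast, mul_div_right_comm, mul_lt_iff_lt_one_left (by positivity)]
    exact (div_lt_one hsj).2 hrj
  have hcard' : #(Ico 0 (J : ℤ) ×ˢ Fintype.piFinset fun _ : Fin d => Ico 0 (T : ℤ)) < #A := by
    simpa [Fintype.card_piFinset] using hcard
  obtain ⟨x, hx, y, hy, hxy, hkey⟩ := exists_ne_map_eq_of_card_lt_of_maps_to hcard' hmaps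
  simp only [Prod.mk.injEq, funext_iff] at hkey
  have hsum : ∑ j, ((r x j : ℤ) - r y j) * k j = x - y := by
    simp only [sub_mul, sum_sub_distrib]
    linarith [hrx x hx, hrx y hy]
  refine ⟨fun j => r x j - r y j, fun j => ?_, hsum ▸ sub_ne_zero.2 hxy, ?_⟩
  · have hsj : (0 : ℝ) < s j := by exact_mod_cast (Nat.zero_le _).trans_lt (hr x hx j)
    have := Int.abs_sub_lt_one_of_floor_eq_floor (hkey.2 j)
    rw [← sub_div, ← sub_mul, abs_div, abs_mul, abs_of_pos hsj, Nat.abs_cast, div_lt_one hsj]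
      at this
    exact_mod_cast (by push_cast; linarith : ((T * |(r x j : ℤ) - r y j| : ℤ) : ℝ) < s j)
  · have hJ' : (0 : ℝ) < J := Nat.cast_pos.2 hJ
    have := Int.abs_sub_lt_one_of_floor_eq_floor hkey.1
    rw [← sub_mul, abs_mul, Nat.abs_cast, ← lt_div_iff₀ hJ'] at this
    rw [hsum, Int.cast_sub, sub_mul, ← nint_fract_sub_fract]
    exact (nint_le_abs _).trans_lt this

lemma exists_popular_difference_of_card_lt (α : ℝ) {A : Finset ℤ} (hA : A ⊆ dimAP d h k s)
    {L J : ℕ} (hL : 2 ≤ L) (hJ : 0 < J) (hcard : J * (2 * L) ^ d < #A) :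
    ∃ m : ℤ, m ≠ 0 ∧ J * nint (m * α) ≤ L ∧
      (#A : ℝ) ^ 2 / (2 ^ d * (∏ j, s j : ℕ)) - #A / L ≤ diffCount A m := by
  obtain ⟨η, hηs, hm, hnint⟩ := exists_short_difference_of_card_lt α hA hJ (by omega) hcard
  set c : Fin d → ℕ := fun j => L * (η j).natAbs
  set B := dimAP d (h - ∑ j, (c j : ℤ) * k j) k (fun j => s j + 2 * c j)
  have hAB : ∀ x ∈ A, ∀ t < L, x + t * ∑ j, η j * k j ∈ B := by
    intro x hx t ht
    have hη : ∀ j, |t * η j| ≤ c j := fun j => by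
      simp only [c, abs_mul, Nat.abs_cast, Nat.cast_mul, Int.natCast_natAbs]
      exact mul_le_mul_of_nonneg_right (by exact_mod_cast ht.le) (abs_nonneg _)
    simpa only [mul_sum, mul_assoc] using add_sum_mem_dimAP (hA hx) hη
  obtain ⟨j, hj, hjL, hjE⟩ := exists_le_diffCount_mul hm hL hAB
  have hB : (#B : ℝ) ≤ 2 ^ d * (∏ j, s j : ℕ) := by
    have : ∏ j, (s j + 2 * c j) ≤ ∏ j, 2 * s j := prod_le_prod' fun i _ => by
      have hi : 2 * L * (η i).natAbs < s i := by
        have := hηs i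
        rw [← Int.natCast_natAbs] at this
        exact_mod_cast this
      simp only [c]
      linarith
    calc (#B : ℝ) ≤ ((∏ j, 2 * s j : ℕ) : ℝ) := by
          exact_mod_cast card_dimAP_le.trans this
      _ = 2 ^ d * (∏ j, s j : ℕ) := by simp [prod_mul_distrib]
  have hApos : 0 < #A := (Nat.zero_le _).trans_lt hcard
  have hBpos : (0 : ℝ) < #B := by
    obtain ⟨x, hx⟩ := card_pos.1 hApos
    exact Nat.cast_pos.2 (card_pos.2 ⟨_, by simpa using hAB x hx 0 (by omega)⟩)
  refine ⟨j * ∑ j, η j * k j, mul_ne_zero hj hm, ?_, hjE.trans' ?_⟩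
  · have hjL' : |(j : ℝ)| ≤ L := by exact_mod_cast hjL.le
    rw [lt_div_iff₀ (Nat.cast_pos.2 hJ), mul_comm] at hnint
    rw [Int.cast_mul, mul_assoc]
    calc (J : ℝ) * nint (j * _) ≤ J * (|(j : ℝ)| * nint _) := by
          gcongr
          exact nint_intCast_mul_le j _
      _ = |(j : ℝ)| * (J * nint _) := by ring
      _ ≤ L := (mul_le_of_le_one_right (abs_nonneg _) hnint.le).trans hjL'
  · gcongr

lemma exists_popular_difference_of_dense (α : ℝ) {C K : ℝ} (hC : 0 < C) (hK : 0 < K) {N : ℕ}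
    {A : Finset ℤ} (hAN : #A ≤ N) (hCA : C * N ≤ #A) (hA : A ⊆ dimAP d h k s)
    (hs : ((∏ j, s j : ℕ) : ℝ) ≤ K * N) {L : ℕ} (hL : 2 ≤ L) (hLK : 2 ^ (d + 1) * K ≤ C ^ 2 * L)
    (hN : 2 * (2 * L : ℝ) ^ d ≤ C * N) :
    ∃ m : ℤ, m ≠ 0 ∧ N * nint (m * α) ≤ 4 * L * (2 * L : ℝ) ^ d / C ∧
      C ^ 2 / (2 ^ (d + 1) * K) * N ≤ diffCount A m := by
  set T : ℝ := (2 * L) ^ d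
  have hT : 0 < T := by positivity
  have hNpos : (0 : ℝ) < N := pos_of_mul_pos_right (by linarith) hC.le
  have hone : 1 ≤ C * N / (2 * T) := by rw [le_div_iff₀ (by positivity)]; linarith
  set J := ⌊C * N / (2 * T)⌋₊
  have hJlow : C * N / (2 * T) / 2 < J := Nat.div_two_lt_floor hone
  have hJpos : 0 < J := Nat.cast_pos.1 (hJlow.trans_le' (by positivity))
  have hcard : J * (2 * L) ^ d < #A := by
    have : (J : ℝ) * T < #A :=
      calc (J : ℝ) * T ≤ C * N / (2 * T) * T := by gcongr; exact Nat.floor_le (by positivity)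
        _ < C * N := by field_simp; linarith [mul_pos hC hNpos]
        _ ≤ #A := hCA
    exact_mod_cast (show ((J * (2 * L) ^ d : ℕ) : ℝ) < #A by push_cast; exact this)
  obtain ⟨m, hm, hJm, hE⟩ := exists_popular_difference_of_card_lt α hA hL hJpos hcard
  refine ⟨m, hm, ?_, hE.trans' (mul_le_sq_div_sub_div_of_dense hC hK (Nat.cast_pos.1 hNpos)
    hAN hCA ?_ hs (by omega) hLK)⟩
  · have : C * N / (2 * T) / 2 * nint (m * α) ≤ L :=
      (mul_le_mul_of_nonneg_right hJlow.le (nint_nonneg _)).trans hJm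
    rw [le_div_iff₀ hC]
    field_simp at this
    linarith
  · exact (card_le_card hA).trans card_dimAP_le

end Progression

theorem QuasiArithmetic.frequently_exists_popular_difference {a : ℕ → ℕ} {d : ℕ}
    (hqa : QuasiArithmetic a d) (α : ℝ) :
    ∃ c S : ℝ, 0 < c ∧ ∃ᶠ N : ℕ in atTop, ∃ A ⊆ firstN a N, ∃ m : ℤ, m ≠ 0 ∧
      (N : ℝ) * nint (m * α) ≤ S ∧ c * N ≤ diffCount A m := by
  obtain ⟨C, K, hC, hK, N, hNmono, -, hN⟩ := hqa
  obtain ⟨L, hL, hLK⟩ : ∃ L : ℕ, 2 ≤ L ∧ 2 ^ (d + 1) * K ≤ C ^ 2 * L := by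
    refine ⟨⌈2 ^ (d + 1) * K / C ^ 2⌉₊ + 2, by omega, ?_⟩
    rw [← div_le_iff₀' (by positivity)]
    push_cast
    linarith [Nat.le_ceil (2 ^ (d + 1) * K / C ^ 2)]
  refine ⟨C ^ 2 / (2 ^ (d + 1) * K), 4 * L * (2 * L : ℝ) ^ d / C, by positivity,
    hNmono.tendsto_atTop.frequently (Eventually.frequently ?_)⟩
  filter_upwards [hNmono.tendsto_atTop.eventually_ge_atTop ⌈2 * (2 * L : ℝ) ^ d / C⌉₊] with i hi
  obtain ⟨A, hAsub, hCA, h, k, s, -, hA, hs⟩ := hN i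
  have hAN : #A ≤ N i := (card_le_card hAsub).trans (card_image_le.trans (by simp))
  refine ⟨A, hAsub, exists_popular_difference_of_dense α hC hK hAN hCA hA hs hL hLK ?_⟩
  rw [← div_le_iff₀' hC]
  exact Nat.ceil_le.1 hi

theorem stmt2_general (a : ℕ → ℕ) (d : ℕ) (hqa : QuasiArithmetic a d) :
    ¬ ∃ α : ℝ, PoissonianPairCorrelations (fun n => Int.fract ((a n : ℝ) * α)) := by
  rintro ⟨α, hα⟩
  obtain ⟨c, S, hc, hfreq⟩ := hqa.frequently_exists_popular_difference α
  refine hα.not_frequently_pairsAtDist (S := S) hc (hfreq.mono ?_)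
  rintro N ⟨A, hA, m, hm, hS, hcN⟩
  exact ⟨nint (m * α), mul_nonneg N.cast_nonneg (nint_nonneg _), hS,
    hcN.trans (by exact_mod_cast diffCount_le_card_pairsAtDist a α hA hm)⟩

theorem stmt2 (a : ℕ → ℕ) (ha : StrictMono a) (ha_pos : ∀ n, 0 < a n)
    (d : ℕ) (hd : 0 < d) (hqa : QuasiArithmetic a d) :
    ¬ ∃ α : ℝ, PoissonianPairCorrelations (fun n => Int.fract ((a n : ℝ) * α)) :=
  stmt2_general a d hqa
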